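/- Let G be a K-CSA group and g ∈ G an element of infinite order. Then M(g) = { h ∈ G : the subgroup ⟨g, h⟩ is K-virtually abelian }, where a group is K-virtually abelian if it has an abelian subgroup of index at most K. -/

import Mathlib

/-- A subgroup `M` is virtually abelian if it has an abelian subgroup of finite index. -/
def IsVirtAbelian {G : Type*} [Group G] (M : Subgroup G) : Prop :=
  ∃ A : Subgroup G, A ≤ M ∧ (∀ x ∈ A, ∀ y ∈ A, x * y = y * x) ∧ A.relIndex M ≠ 0

/-- A subgroup `M` is `K`-virtually abelian if it has an abelian subgroup of index at most `K`. -/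
def IsKVirtAbelian {G : Type*} [Group G] (K : ℕ) (M : Subgroup G) : Prop :=
  ∃ A : Subgroup G, A ≤ M ∧ (∀ x ∈ A, ∀ y ∈ A, x * y = y * x) ∧
    A.relIndex M ≠ 0 ∧ A.relIndex M ≤ K

/-- `M` is `K`-virtually torsion-free abelian: it has a torsion-free abelian subgroup of
index at most `K`. -/
def IsKVirtTorsionFreeAbelian {G : Type*} [Group G] (K : ℕ) (M : Subgroup G) : Prop :=
  ∃ A : Subgroup G, A ≤ M ∧ (∀ x ∈ A, ∀ y ∈ A, x * y = y * x) ∧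
    (∀ x ∈ A, x ≠ 1 → ¬ IsOfFinOrder x) ∧ A.relIndex M ≠ 0 ∧ A.relIndex M ≤ K

/-- `M` is the (unique) maximal virtually abelian subgroup containing `g`: it is virtually
abelian, contains `g`, and contains every virtually abelian subgroup containing `g`. -/
def IsMaxVirtAbelianOf {G : Type*} [Group G] (g : G) (M : Subgroup G) : Prop :=
  g ∈ M ∧ IsVirtAbelian M ∧ ∀ M' : Subgroup G, g ∈ M' → IsVirtAbelian M' → M' ≤ M

/-- `G` is a `K`-CSA group: every finite subgroup has order at most `K`; every element of
infinite order lies in a unique maximal virtually abelian subgroup `M(g)`, which is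
`K`-virtually torsion-free abelian and equal to its own normalizer. -/
def IsKCSAGroup (K : ℕ) (G : Type*) [Group G] : Prop :=
  0 < K ∧
  (∀ H : Subgroup G, (H : Set G).Finite → Nat.card H ≤ K) ∧
  (∀ g : G, ¬ IsOfFinOrder g → ∃ M : Subgroup G,
    IsMaxVirtAbelianOf g M ∧ IsKVirtTorsionFreeAbelian K M ∧ Subgroup.normalizer (M : Set G) = M)

namespace IsKVirtAbelian

variable {G : Type*} [Group G] {K : ℕ} {H M : Subgroup G}

theorem isVirtAbelian (hM : IsKVirtAbelian K M) : IsVirtAbelian M :=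
  let ⟨A, hAM, hAab, hA0, _⟩ := hM
  ⟨A, hAM, hAab, hA0⟩

theorem mono (hM : IsKVirtAbelian K M) (hHM : H ≤ M) : IsKVirtAbelian K H := by
  obtain ⟨A, -, hAab, hA0, hAK⟩ := hM
  have hAH : A.relIndex H ≤ A.relIndex M := Subgroup.relIndex_le_of_le_right hHM hA0
  refine ⟨A ⊓ H, inf_le_right, fun x hx y hy => hAab x hx.1 y hy.1, ?_, ?_⟩
  · rw [Subgroup.inf_relIndex_right]
    exact fun h0 => hA0 (Subgroup.relIndex_eq_zero_of_le_right hHM h0)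
  · rw [Subgroup.inf_relIndex_right]
    exact hAH.trans hAK

end IsKVirtAbelian

theorem IsKVirtTorsionFreeAbelian.isKVirtAbelian {G : Type*} [Group G] {K : ℕ}
    {M : Subgroup G} (hM : IsKVirtTorsionFreeAbelian K M) : IsKVirtAbelian K M :=
  let ⟨A, hAM, hAab, _, hA0, hAK⟩ := hM
  ⟨A, hAM, hAab, hA0, hAK⟩

namespace IsMaxVirtAbelianOf

variable {G : Type*} [Group G] {g : G} {M : Subgroup G}

theorem unique {M' : Subgroup G} (hM : IsMaxVirtAbelianOf g M)
    (hM' : IsMaxVirtAbelianOf g M') : M = M' :=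
  le_antisymm (hM'.2.2 M hM.1 hM.2.1) (hM.2.2 M' hM'.1 hM'.2.1)

theorem closure_pair_le_iff (hM : IsMaxVirtAbelianOf g M) (h : G) :
    Subgroup.closure ({g, h} : Set G) ≤ M ↔ h ∈ M := by
  simp [Subgroup.closure_le, Set.insert_subset_iff, hM.1]

theorem mem_of_isVirtAbelian_closure_pair (hM : IsMaxVirtAbelianOf g M) {h : G}
    (hgh : IsVirtAbelian (Subgroup.closure ({g, h} : Set G))) : h ∈ M :=
  (hM.closure_pair_le_iff h).mp (hM.2.2 _ (Subgroup.subset_closure (Set.mem_insert g _)) hgh)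

end IsMaxVirtAbelianOf

theorem IsKCSAGroup.isKVirtAbelian_of_isMaxVirtAbelianOf {G : Type*} [Group G] {K : ℕ}
    (hG : IsKCSAGroup K G) {g : G} (hg : ¬ IsOfFinOrder g) {M : Subgroup G}
    (hM : IsMaxVirtAbelianOf g M) : IsKVirtAbelian K M := by
  obtain ⟨M', hM', hKtf, -⟩ := hG.2.2 g hg
  exact hM.unique hM' ▸ hKtf.isKVirtAbelian

/-- In a `K`-CSA group, for `g` of infinite order,
`M(g) = { h | ⟨g,h⟩ is K-virtually abelian }`. -/
theorem stmt_6 {G : Type*} [Group G] {K : ℕ} (hG : IsKCSAGroup K G) (g : G)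
    (hg : ¬ IsOfFinOrder g) (M : Subgroup G) (hM : IsMaxVirtAbelianOf g M) :
    ∀ h : G, h ∈ M ↔ IsKVirtAbelian K (Subgroup.closure ({g, h} : Set G)) := by
  intro h
  constructor
  · intro hh
    exact (hG.isKVirtAbelian_of_isMaxVirtAbelianOf hg hM).mono
      ((hM.closure_pair_le_iff h).mpr hh)
  · intro hgh
    exact hM.mem_of_isVirtAbelian_closure_pair hgh.isVirtAbelian
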